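/- Let S be a measurable space and μ a shift-invariant probability measure on S^{Z^d}. For each n ≥ 1 let ν_n := (2n)^{−d} Σ_{i∈Λ_n} (μ_{Λ_n})^per ∘ θ_i^{−1} be the averaged periodization of the Λ_n-marginal μ_{Λ_n}. Then ν_n converges locally to μ: for every finite Γ ⊂ Z^d and every bounded measurable function g on S^{Z^d} that depends only on the coordinates in Γ, lim_{n→∞} ∫ g dν_n = ∫ g dμ. -/

import Mathlib

/-! The block of a periodization at the origin has law `μ_{Λ_n}`. If `g` depends only on the
coordinates in `Γ ⊆ Λ_M`, then for every shift `i ∈ Λ_{n-M}` the function `g ∘ θ_i` depends only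
on coordinates in `Λ_n`, so its integral under `(μ_{Λ_n})^per` equals its integral under `μ`, which
is `∫ g dμ` by shift invariance. The remaining shifts, each off by at most `2 sup |g|`, make up
a fraction `1 - (1 - M/n)^d → 0` of `Λ_n`. -/

open MeasureTheory Filter
open scoped ENNReal

/-- The lattice `ℤ^d`. -/
abbrev Zd (d : ℕ) := Fin d → ℤ

/-- The shift by vector `-i` on the configuration space `S^{ℤ^d}`:
`(θ_i ω)_j = ω_{j+i}`. -/
def shift (S : Type*) {d : ℕ} (i : Zd d) (ω : Zd d → S) : Zd d → S :=
  fun j => ω (j + i)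

/-- A measure on `S^{ℤ^d}` is shift-invariant if it is invariant under all shifts. -/
def ShiftInvariant {S : Type*} [MeasurableSpace S] {d : ℕ}
    (μ : Measure (Zd d → S)) : Prop :=
  ∀ i : Zd d, μ.map (shift S i) = μ

/-- The cube `Λ_n = {-n, …, n-1}^d` as a finite subset of `ℤ^d`. -/
noncomputable def cube (d n : ℕ) : Finset (Zd d) :=
  Finset.Icc (fun _ => -(n : ℤ)) (fun _ => (n : ℤ) - 1)

/-- The decomposition of a configuration `ω ∈ S^{ℤ^d}` into its `2n`-blocks: the block
indexed by `k ∈ ℤ^d` is `(ω_{j + 2nk})_{j ∈ Λ_n}`. -/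
def blockMap (S : Type*) (d n : ℕ) (ω : Zd d → S) : Zd d → (cube d n → S) :=
  fun k j => ω (fun l => (j : Zd d) l + (2 * (n : ℤ)) * k l)

/-- `Qper` is the periodization of a probability measure `Q` on `S^{Λ_n}`: the probability
measure on `S^{ℤ^d}` under which the disjoint blocks `((ω_{j+2nk})_{j∈Λ_n})_{k∈ℤ^d}` are
i.i.d. with law `Q`; it is characterized by the fact that every finite family of blocks is
distributed according to the corresponding finite product of copies of `Q`. -/
def IsPeriodization {S : Type*} [MeasurableSpace S] {d n : ℕ}
    (Q : Measure (cube d n → S)) (Qper : Measure (Zd d → S)) : Prop :=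
  IsProbabilityMeasure Qper ∧
    ∀ K : Finset (Zd d),
      Qper.map (fun ω (k : K) => blockMap S d n ω k)
        = Measure.pi (fun _ : K => Q)

/-- The marginal of `μ` on the coordinates in `Λ`. -/
noncomputable def marginal {S : Type*} [MeasurableSpace S] {d : ℕ}
    (μ : Measure (Zd d → S)) (Λ : Finset (Zd d)) : Measure (Λ → S) :=
  μ.map (fun ω (j : Λ) => ω j)

open Finset Function Topology

theorem integral_eq_of_map_restrict_eq {ι : Type*} {X : ι → Type*} [∀ i, MeasurableSpace (X i)]
    {E : Type*} [NormedAddCommGroup E] [NormedSpace ℝ E] {ν ν' : Measure (Π i, X i)} {s : Finset ι}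
    (h : ν.map s.restrict = ν'.map s.restrict) {f : (Π i, X i) → E}
    (hf : StronglyMeasurable f) (hfs : DependsOn f s) :
    ∫ x, f x ∂ν = ∫ x, f x ∂ν' := by
  classical
  rcases isEmpty_or_nonempty (Π i, X i) with _ | ⟨⟨x₀⟩⟩
  · simp [Measure.eq_zero_of_isEmpty ν, Measure.eq_zero_of_isEmpty ν']
  have hfac : ∀ x, f (updateFinset x₀ s (s.restrict x)) = f x :=
    fun x => hfs fun i hi => by simp [updateFinset, show i ∈ s from hi]
  have hm : StronglyMeasurable fun y => f (updateFinset x₀ s y) :=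
    hf.comp_measurable measurable_updateFinset
  have hpush : ∀ μ : Measure (Π i, X i),
      ∫ x, f x ∂μ = ∫ y, f (updateFinset x₀ s y) ∂(μ.map s.restrict) := fun μ => by
    rw [integral_map (s.measurable_restrict).aemeasurable hm.aestronglyMeasurable]
    simp only [hfac]
  rw [hpush ν, hpush ν', h]

theorem integral_inv_card_smul_sum_measure {α ι : Type*} [MeasurableSpace α] (B : Finset ι)
    {ν : ι → Measure α} {f : α → ℝ} (hf : ∀ i ∈ B, Integrable f (ν i)) :
    ∫ x, f x ∂((#B : ℝ≥0∞)⁻¹ • ∑ i ∈ B, ν i) = (∑ i ∈ B, ∫ x, f x ∂ν i) / #B := by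
  rw [integral_smul_measure, integral_finsetSum_measure hf, ENNReal.toReal_inv,
    ENNReal.toReal_natCast, smul_eq_mul, inv_mul_eq_div]

theorem abs_sum_div_card_sub_le {ι : Type*} {A B : Finset ι} (hAB : A ⊆ B) (hB : B.Nonempty)
    {a : ι → ℝ} {c D : ℝ} (hA : ∀ i ∈ A, a i = c) (hD : ∀ i ∈ B, |a i - c| ≤ D) :
    |(∑ i ∈ B, a i) / #B - c| ≤ D * (1 - #A / #B) := by
  classical
  have hBpos : (0 : ℝ) < #B := by exact_mod_cast hB.card_pos
  have hcenter : (∑ i ∈ B, a i) / #B - c = (∑ i ∈ B \ A, (a i - c)) / #B := by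
    have hgood : ∑ i ∈ B \ A, (a i - c) = ∑ i ∈ B, (a i - c) :=
      sum_subset sdiff_subset fun i hiB hi => sub_eq_zero.mpr (hA i (by simp_all))
    rw [hgood, sum_sub_distrib, sum_const, nsmul_eq_mul]
    field_simp
  have hbad : |∑ i ∈ B \ A, (a i - c)| ≤ #(B \ A) * D :=
    (abs_sum_le_sum_abs _ _).trans <| by
      simpa using sum_le_card_nsmul _ _ _ fun i hi => hD i (sdiff_subset hi)
  calc |(∑ i ∈ B, a i) / #B - c| = |∑ i ∈ B \ A, (a i - c)| / #B := by
        rw [hcenter, abs_div, abs_of_pos hBpos]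
    _ ≤ #(B \ A) * D / #B := by gcongr
    _ = D * (1 - #A / #B) := by
        rw [card_sdiff_of_subset hAB, Nat.cast_sub (card_le_card hAB)]
        field_simp

theorem abs_integral_sub_integral_le {α : Type*} [MeasurableSpace α] {ν ν' : Measure α}
    [IsProbabilityMeasure ν] [IsProbabilityMeasure ν'] {f : α → ℝ} {C : ℝ} (hC : ∀ x, |f x| ≤ C) :
    |∫ x, f x ∂ν - ∫ x, f x ∂ν'| ≤ 2 * C := by
  have hbound : ∀ (ρ : Measure α) [IsProbabilityMeasure ρ], |∫ x, f x ∂ρ| ≤ C := fun ρ _ => by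
    simpa using norm_integral_le_of_norm_le_const (μ := ρ)
      (ae_of_all _ fun x => (Real.norm_eq_abs _).trans_le (hC x))
  calc |∫ x, f x ∂ν - ∫ x, f x ∂ν'| ≤ |∫ x, f x ∂ν| + |∫ x, f x ∂ν'| := abs_sub _ _
    _ ≤ 2 * C := by linarith [hbound ν, hbound ν']

section Cube

variable {d : ℕ}

theorem mem_cube {n : ℕ} {i : Zd d} : i ∈ cube d n ↔ ∀ l, -(n : ℤ) ≤ i l ∧ i l ≤ n - 1 := by
  simp [cube, Pi.le_def, forall_and]

theorem card_cube (d n : ℕ) : #(cube d n) = (2 * n) ^ d := by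
  simp only [cube, Pi.card_Icc, Int.card_Icc, prod_const, card_univ, Fintype.card_fin]
  congr 1
  omega

theorem add_mem_cube {m k : ℕ} {i j : Zd d} (hi : i ∈ cube d m) (hj : j ∈ cube d k) :
    i + j ∈ cube d (m + k) := by
  rw [mem_cube] at *
  intro l
  have := hi l
  have := hj l
  simp only [Pi.add_apply]
  omega

theorem cube_mono {m n : ℕ} (hmn : m ≤ n) : cube d m ⊆ cube d n := fun i hi => by
  rw [mem_cube] at *
  intro l
  have := hi l
  omega

theorem zero_mem_cube {n : ℕ} (hn : n ≠ 0) : (0 : Zd d) ∈ cube d n :=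
  mem_cube.mpr fun _ => by simp only [Pi.zero_apply]; omega

theorem image_add_subset_cube {Γ : Set (Zd d)} {M n : ℕ} (hΓ : Γ ⊆ cube d M) (hMn : M ≤ n)
    {i : Zd d} (hi : i ∈ cube d (n - M)) : (· + i) '' Γ ⊆ cube d n := by
  rintro _ ⟨j, hj, rfl⟩
  simpa [Nat.add_sub_cancel' hMn] using add_mem_cube (hΓ hj) hi

theorem exists_subset_cube (Γ : Finset (Zd d)) : ∃ M, Γ ⊆ cube d M := by
  refine ⟨Γ.sup fun i => univ.sup fun l => (i l).natAbs + 1, fun i hi => mem_cube.mpr fun l => ?_⟩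
  have : (i l).natAbs + 1 ≤ Γ.sup fun i => univ.sup fun l => (i l).natAbs + 1 :=
    (le_sup (f := fun l => (i l).natAbs + 1) (mem_univ l)).trans
      (le_sup (f := fun i => univ.sup fun l => (i l).natAbs + 1) hi)
  omega

theorem tendsto_card_cube_sub_div_card_cube (d M : ℕ) :
    Tendsto (fun n => (#(cube d (n - M)) : ℝ) / #(cube d n)) atTop (𝓝 1) := by
  have hlim : Tendsto (fun n : ℕ => (1 - (M : ℝ) / n) ^ d) atTop (𝓝 1) := by
    simpa using ((tendsto_const_div_atTop_nhds_zero_nat (M : ℝ)).const_sub 1).pow d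
  refine hlim.congr' ?_
  filter_upwards [eventually_ge_atTop (M + 1)] with n hn
  have hn0 : (n : ℝ) ≠ 0 := by norm_cast; omega
  rw [card_cube, card_cube, Nat.cast_pow, Nat.cast_pow, ← div_pow]
  push_cast [Nat.cast_sub (show M ≤ n by omega)]
  field_simp

end Cube

section Shift

variable {S : Type*} {d : ℕ}

theorem DependsOn.comp_shift {β : Type*} {f : (Zd d → S) → β} {s : Set (Zd d)}
    (hf : DependsOn f s) (i : Zd d) : DependsOn (fun ω => f (shift S i ω)) ((· + i) '' s) :=
  fun _ _ h => hf fun j hj => h (j + i) ⟨j, hj, rfl⟩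

variable [MeasurableSpace S]

theorem measurable_shift (i : Zd d) : Measurable (shift S i) :=
  measurable_pi_lambda _ fun _ => measurable_pi_apply _

variable {E : Type*} [NormedAddCommGroup E] [NormedSpace ℝ E]

theorem ShiftInvariant.integral_comp_shift {μ : Measure (Zd d → S)} (hμ : ShiftInvariant μ)
    {f : (Zd d → S) → E} (hf : StronglyMeasurable f) (i : Zd d) :
    ∫ ω, f (shift S i ω) ∂μ = ∫ ω, f ω ∂μ := by
  rw [← integral_map (measurable_shift i).aemeasurable (hμ i ▸ hf.aestronglyMeasurable), hμ i]

theorem IsPeriodization.marginal_eq {n : ℕ} {Q : Measure (cube d n → S)}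
    {Qper : Measure (Zd d → S)} (h : IsPeriodization Q Qper) : marginal Qper (cube d n) = Q := by
  have hblocks : Measurable fun ω (k : ({0} : Finset (Zd d))) => blockMap S d n ω k :=
    measurable_pi_lambda _ fun _ => measurable_pi_lambda _ fun _ => measurable_pi_apply _
  have hblock0 : (MeasurableEquiv.piUnique _ ∘ fun ω (k : ({0} : Finset (Zd d))) =>
      blockMap S d n ω k) = fun ω (j : cube d n) => ω j := by
    funext ω j
    simp [blockMap, MeasurableEquiv.piUnique, Equiv.piUnique]
  rw [marginal, ← hblock0, ← Measure.map_map (MeasurableEquiv.measurable _) hblocks, h.2 {0},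
    (measurePreserving_piUnique _).map_eq]

theorem integral_map_shift_eq_of_image_subset {n : ℕ} {μ : Measure (Zd d → S)}
    (hμ : ShiftInvariant μ) {Qper : Measure (Zd d → S)}
    (hper : IsPeriodization (marginal μ (cube d n)) Qper) {Γ : Set (Zd d)}
    {g : (Zd d → S) → E} (hg : StronglyMeasurable g) (hgΓ : DependsOn g Γ) {i : Zd d}
    (hi : (· + i) '' Γ ⊆ cube d n) :
    ∫ ω, g ω ∂(Qper.map (shift S i)) = ∫ ω, g ω ∂μ := by
  rw [integral_map (measurable_shift i).aemeasurable hg.aestronglyMeasurable,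
    integral_eq_of_map_restrict_eq (f := fun ω => g (shift S i ω)) hper.marginal_eq
      (hg.comp_measurable (measurable_shift i))
      ((hgΓ.comp_shift i).mono hi), hμ.integral_comp_shift hg]

end Shift

theorem averaged_periodization_marginals_local_tendsto_general
    {d : ℕ} {S : Type*} [MeasurableSpace S]
    (μ : Measure (Zd d → S)) [IsProbabilityMeasure μ] (hinv : ShiftInvariant μ)
    (Qper : (n : ℕ) → Measure (Zd d → S))
    (hper : ∀ n : ℕ, 1 ≤ n → IsPeriodization (marginal μ (cube d n)) (Qper n)) :
    ∀ (Γ : Finset (Zd d)) (g : (Zd d → S) → ℝ),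
      Measurable g → (∃ C : ℝ, ∀ ω, |g ω| ≤ C) →
      (∀ ω ω' : Zd d → S, (∀ j ∈ Γ, ω j = ω' j) → g ω = g ω') →
      Tendsto
        (fun n : ℕ =>
          ∫ ω, g ω ∂(((2 * n : ℝ≥0∞) ^ d)⁻¹ • ∑ i ∈ cube d n, (Qper n).map (shift S i)))
        atTop (nhds (∫ ω, g ω ∂μ)) := by
  intro Γ g hg ⟨C, hC⟩ hgΓ
  obtain ⟨M, hΓM⟩ := exists_subset_cube Γ
  have hcard (n : ℕ) : (2 * n : ℝ≥0∞) ^ d = #(cube d n) := by rw [card_cube]; push_cast; rfl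
  have hest : ∀ᶠ n : ℕ in atTop,
      dist (∫ ω, g ω ∂(((2 * n : ℝ≥0∞) ^ d)⁻¹ • ∑ i ∈ cube d n, (Qper n).map (shift S i)))
        (∫ ω, g ω ∂μ) ≤ 2 * C * (1 - #(cube d (n - M)) / #(cube d n)) := by
    filter_upwards [eventually_gt_atTop M] with n hn
    have hQ := hper n (by omega)
    have := hQ.1
    have hshift (i : Zd d) : IsProbabilityMeasure ((Qper n).map (shift S i)) :=
      Measure.isProbabilityMeasure_map (measurable_shift i).aemeasurable
    rw [Real.dist_eq, hcard, integral_inv_card_smul_sum_measure _ fun i _ =>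
      .of_bound hg.aestronglyMeasurable C
        (ae_of_all _ fun ω => (Real.norm_eq_abs _).trans_le (hC ω))]
    exact abs_sum_div_card_sub_le (cube_mono (Nat.sub_le n M)) ⟨0, zero_mem_cube (by omega)⟩
      (fun i hi => integral_map_shift_eq_of_image_subset hinv hQ hg.stronglyMeasurable
        (fun ω ω' h => hgΓ ω ω' h) (image_add_subset_cube (by exact_mod_cast hΓM) hn.le hi))
      fun i _ => abs_integral_sub_integral_le hC
  have hbound : Tendsto (fun n : ℕ => 2 * C * (1 - #(cube d (n - M)) / #(cube d n) : ℝ))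
      atTop (𝓝 0) := by
    simpa using ((tendsto_card_cube_sub_div_card_cube d M).const_sub 1).const_mul (2 * C)
  exact tendsto_iff_dist_tendsto_zero.mpr
    (squeeze_zero' (.of_forall fun _ => dist_nonneg) hest hbound)

/-- The averaged periodizations
`ν_n = (2n)^{-d} Σ_{i ∈ Λ_n} (μ_{Λ_n})^per ∘ θ_i^{-1}` of the finite-volume marginals of a
shift-invariant probability measure `μ` converge locally to `μ`: for every bounded
measurable local function `g`, `∫ g dν_n → ∫ g dμ`. -/
theorem averaged_periodization_marginals_local_tendsto
    {d : ℕ} (hd : 1 ≤ d) {S : Type*} [MeasurableSpace S]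
    (μ : Measure (Zd d → S)) [IsProbabilityMeasure μ] (hinv : ShiftInvariant μ)
    (Qper : (n : ℕ) → Measure (Zd d → S))
    (hper : ∀ n : ℕ, 1 ≤ n → IsPeriodization (marginal μ (cube d n)) (Qper n)) :
    ∀ (Γ : Finset (Zd d)) (g : (Zd d → S) → ℝ),
      Measurable g → (∃ C : ℝ, ∀ ω, |g ω| ≤ C) →
      (∀ ω ω' : Zd d → S, (∀ j ∈ Γ, ω j = ω' j) → g ω = g ω') →
      Tendsto
        (fun n : ℕ =>
          ∫ ω, g ω ∂(((2 * n : ℝ≥0∞) ^ d)⁻¹ • ∑ i ∈ cube d n, (Qper n).map (shift S i)))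
        atTop (nhds (∫ ω, g ω ∂μ)) :=
  averaged_periodization_marginals_local_tendsto_general μ hinv Qper hper
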